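/- Cliques rule. Let G be a simple directed graph on [n] with CTLN parameters in the legal range, and let σ ⊆ [n] be a nonempty clique (for all distinct i, j ∈ σ, both i→j and j→i in G). Then σ ∈ FP(G) if and only if σ is target-free, i.e. there is no k ∈ [n] ∖ σ with i→k for all i ∈ σ. Furthermore, when σ ∈ FP(G): every eigenvalue of −I + W_σ has negative real part (the fixed point is stable) and det(I − W_σ) > 0. -/

import Mathlib

open Matrix Finset

/-- `x` is a fixed point of the TLN `(W, b)` restricted to the subset `τ` of neurons
(coordinates outside `τ` are held at zero): for `i ∈ τ`,
`x i = [∑_{j ∈ τ} W i j * x j + b i]_+`. -/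
def IsRestFixedPoint {n : ℕ} (W : Matrix (Fin n) (Fin n) ℝ) (b : Fin n → ℝ)
    (τ : Finset (Fin n)) (x : Fin n → ℝ) : Prop :=
  (∀ i ∈ τ, x i = max 0 (∑ j ∈ τ, W i j * x j + b i)) ∧ ∀ i ∉ τ, x i = 0

/-- `σ ∈ FP(W_τ, b_τ)` : `σ` is the support of a fixed point of the restriction
of the TLN `(W, b)` to `τ`. -/
def memFP {n : ℕ} (W : Matrix (Fin n) (Fin n) ℝ) (b : Fin n → ℝ)
    (τ σ : Finset (Fin n)) : Prop :=
  ∃ x : Fin n → ℝ, IsRestFixedPoint W b τ x ∧ ∀ i, 0 < x i ↔ i ∈ σ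

/-- `det (I - W_σ)`, the determinant of the principal submatrix on `σ`. -/
noncomputable def detIW {n : ℕ} (W : Matrix (Fin n) (Fin n) ℝ) (σ : Finset (Fin n)) : ℝ :=
  ((1 : Matrix {x // x ∈ σ} {x // x ∈ σ} ℝ) - W.submatrix Subtype.val Subtype.val).det

/-- The Cramer determinant `s_i^σ := det ((I − W_{σ∪{i}})_i ; b_{σ∪{i}})`:
the matrix `I − W` restricted to `σ ∪ {i}`, with the column indexed by `i`
replaced by `b` restricted to `σ ∪ {i}`. -/
noncomputable def cramerDet {n : ℕ} (W : Matrix (Fin n) (Fin n) ℝ) (b : Fin n → ℝ)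
    (σ : Finset (Fin n)) (i : Fin n) : ℝ :=
  (Matrix.updateCol
      ((1 : Matrix {x // x ∈ insert i σ} {x // x ∈ insert i σ} ℝ)
        - W.submatrix Subtype.val Subtype.val)
      ⟨i, Finset.mem_insert_self i σ⟩ (fun p => b p.val)).det

/-- The TLN `(W, b)` is competitive. -/
def Competitive {n : ℕ} (W : Matrix (Fin n) (Fin n) ℝ) (b : Fin n → ℝ) : Prop :=
  (∀ i j, W i j ≤ 0) ∧ (∀ i, W i i = 0) ∧ (∀ i, 0 ≤ b i)

/-- The TLN `(W, b)` is nondegenerate. -/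
def Nondegenerate {n : ℕ} (W : Matrix (Fin n) (Fin n) ℝ) (b : Fin n → ℝ) : Prop :=
  (∃ i, 0 < b i) ∧ (∀ σ : Finset (Fin n), detIW W σ ≠ 0) ∧
  (∀ σ : Finset (Fin n), (∀ i ∈ σ, 0 < b i) → ∀ i ∈ σ, cramerDet W b σ i ≠ 0)

/-- The CTLN connectivity matrix of the simple directed graph `G`
(here `G j i` means there is an edge `j → i` in `G`). -/
def ctlnW {n : ℕ} (G : Fin n → Fin n → Prop) [DecidableRel G] (ε δ : ℝ) :
    Matrix (Fin n) (Fin n) ℝ :=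
  Matrix.of fun i j => if i = j then 0 else if G j i then -1 + ε else -1 - δ

/-- `k` graphically dominates `j` with respect to `σ`, in the directed graph `G`
(where `G a b` means there is an edge `a → b`). -/
def GraphDominates {α : Type*} (G : α → α → Prop) (σ : Finset α) (k j : α) : Prop :=
  (j ∈ σ ∨ k ∈ σ) ∧
  (∀ i ∈ σ, i ≠ j → i ≠ k → G i j → G i k) ∧
  (j ∈ σ → G j k) ∧ (k ∈ σ → ¬ G k j)

/-- `w_j^σ := ∑_{i ∈ σ} (−I + W)_{j i} · |s_i^σ|`. -/
noncomputable def wval {n : ℕ} (W : Matrix (Fin n) (Fin n) ℝ) (b : Fin n → ℝ)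
    (σ : Finset (Fin n)) (j : Fin n) : ℝ :=
  ∑ i ∈ σ, (W j i - if j = i then 1 else 0) * |cramerDet W b σ i|

/-!
On a clique `σ` of size `k` the weights are `W_σ = (1 - ε) (I - J)`, `J` the all-ones matrix,
so neuron `i ∈ σ` receives `(-1 + ε) S + (1 - ε) x_i + θ` from a vector `x` with support `σ`
and `S = ∑_σ x`. At a fixed point this equals `x_i`, hence a target of `σ`, which receives
`(-1 + ε) S + θ = ε x_i > 0`, would be active. Conversely, if `σ` has no target, the uniform
vector with value `c = θ / (k - (k - 1) ε)` on `σ` is a fixed point: every `i ∉ σ` misses an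
edge from some `j ∈ σ`, which lowers its input by `(δ + ε) c` to at most `-δ c < 0`. Finally,
`-I + W_σ = -ε I - (1 - ε) J` has the eigenvalues `-ε` and `-(k - (k - 1) ε)`, and
`det (I - W_σ) = ε ^ (k - 1) (k - (k - 1) ε)`.
-/

section AllOnes

variable {ι F : Type*} [Fintype ι] [DecidableEq ι] [Field F]

theorem det_smul_one_add_smul_allOnes (c d : F) (hc : c ≠ 0) :
    (c • (1 : Matrix ι ι F) + d • of fun _ _ => 1).det
      = c ^ Fintype.card ι * (1 + d / c * Fintype.card ι) := by
  have hrank_one : c • (1 : Matrix ι ι F) + d • of (fun _ _ => 1)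
      = c • (1 + replicateCol Unit (fun _ : ι => d / c)
          * replicateRow Unit (fun _ : ι => (1 : F))) := by
    ext i j
    by_cases h : i = j <;> simp [h, mul_apply, one_apply] <;> field_simp
  rw [hrank_one, det_smul, det_one_add_replicateCol_mul_replicateRow]
  simp [dotProduct, mul_comm]

theorem eq_or_eq_of_isRoot_charpoly_smul_one_add_smul_allOnes {c d μ : F}
    (h : (c • (1 : Matrix ι ι F) + d • of fun _ _ => 1).charpoly.IsRoot μ) :
    μ = c ∨ μ = c + d * Fintype.card ι := by
  refine or_iff_not_imp_left.2 fun hμ => ?_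
  have hμc : μ - c ≠ 0 := sub_ne_zero.2 hμ
  have hshift : scalar ι μ - (c • (1 : Matrix ι ι F) + d • of fun _ _ => 1)
      = (μ - c) • 1 + (-d) • of fun _ _ => 1 := by
    ext i j
    by_cases h : i = j <;> simp [h, one_apply]; ring
  rw [Polynomial.IsRoot, eval_charpoly, hshift, det_smul_one_add_smul_allOnes _ _ hμc] at h
  have h_factor := (mul_eq_zero.1 h).resolve_left (pow_ne_zero _ hμc)
  field_simp at h_factor
  linear_combination h_factor

end AllOnes

theorem memFP_univ_iff {n : ℕ} {W : Matrix (Fin n) (Fin n) ℝ} {b : Fin n → ℝ}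
    {σ : Finset (Fin n)} :
    memFP W b univ σ ↔ ∃ x : Fin n → ℝ,
      (∀ i, x i = max 0 (∑ j ∈ σ, W i j * x j + b i)) ∧ ∀ i, 0 < x i ↔ i ∈ σ := by
  have h_sum : ∀ x : Fin n → ℝ, (∀ i, 0 ≤ x i) → (∀ i, 0 < x i ↔ i ∈ σ) →
      ∀ i, ∑ j, W i j * x j = ∑ j ∈ σ, W i j * x j := fun x hx hsupp i =>
    (sum_subset σ.subset_univ fun j _ hj => by
      rw [le_antisymm (not_lt.1 (mt (hsupp j).1 hj)) (hx j), mul_zero]).symm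
  constructor
  · rintro ⟨x, ⟨hfix, -⟩, hsupp⟩
    have hx : ∀ i, 0 ≤ x i := fun i => (hfix i (mem_univ i)).symm ▸ le_max_left _ _
    exact ⟨x, fun i => h_sum x hx hsupp i ▸ hfix i (mem_univ i), hsupp⟩
  · rintro ⟨x, hfix, hsupp⟩
    have hx : ∀ i, 0 ≤ x i := fun i => (hfix i).symm ▸ le_max_left _ _
    exact ⟨x, ⟨fun i _ => (h_sum x hx hsupp i).symm ▸ hfix i, by simp⟩, hsupp⟩

section Clique

variable {n : ℕ} {G : Fin n → Fin n → Prop} [DecidableRel G] {ε δ : ℝ} {σ : Finset (Fin n)}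
  {i j : Fin n}

theorem ctlnW_apply_of_mem_clique (hclique : ∀ i ∈ σ, ∀ j ∈ σ, i ≠ j → G i j)
    (hi : i ∈ σ) (hj : j ∈ σ) :
    ctlnW G ε δ i j = -1 + ε + if i = j then 1 - ε else 0 := by
  by_cases h : i = j
  · simp [ctlnW, h]
  · simp [ctlnW, h, hclique j hj i hi (Ne.symm h)]

theorem ctlnW_apply_of_adj (hij : i ≠ j) (hadj : G j i) : ctlnW G ε δ i j = -1 + ε := by
  simp [ctlnW, hij, hadj]

theorem ctlnW_apply_of_not_adj (hij : i ≠ j) (hadj : ¬ G j i) : ctlnW G ε δ i j = -1 - δ := by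
  simp [ctlnW, hij, hadj]

theorem ctlnW_apply_le (hεδ : -δ ≤ ε) (hij : i ≠ j) : ctlnW G ε δ i j ≤ -1 + ε := by
  by_cases hadj : G j i
  · exact (ctlnW_apply_of_adj hij hadj).le
  · rw [ctlnW_apply_of_not_adj hij hadj]
    linarith

theorem sum_ctlnW_mul_of_mem_clique (hclique : ∀ i ∈ σ, ∀ j ∈ σ, i ≠ j → G i j) (hi : i ∈ σ)
    (x : Fin n → ℝ) :
    ∑ j ∈ σ, ctlnW G ε δ i j * x j = (-1 + ε) * ∑ j ∈ σ, x j + (1 - ε) * x i := by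
  rw [sum_congr rfl fun j hj => by rw [ctlnW_apply_of_mem_clique hclique hi hj]]
  simp [add_mul, sum_add_distrib, mul_sum, hi]

theorem sum_ctlnW_mul_of_forall_adj (hi : i ∉ σ) (hadj : ∀ j ∈ σ, G j i) (x : Fin n → ℝ) :
    ∑ j ∈ σ, ctlnW G ε δ i j * x j = (-1 + ε) * ∑ j ∈ σ, x j := by
  rw [mul_sum]
  exact sum_congr rfl fun j hj => by
    rw [ctlnW_apply_of_adj (ne_of_mem_of_not_mem hj hi).symm (hadj j hj)]

theorem sum_ctlnW_mul_le_of_not_adj (hεδ : -δ ≤ ε) (hi : i ∉ σ) {j₀ : Fin n} (hj₀ : j₀ ∈ σ)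
    (hadj : ¬ G j₀ i) {x : Fin n → ℝ} (hx : ∀ j ∈ σ, 0 ≤ x j) :
    ∑ j ∈ σ, ctlnW G ε δ i j * x j ≤ (-1 + ε) * ∑ j ∈ σ, x j - (δ + ε) * x j₀ :=
  calc ∑ j ∈ σ, ctlnW G ε δ i j * x j
      ≤ ∑ j ∈ σ, ((-1 + ε) * x j - if j = j₀ then (δ + ε) * x j₀ else 0) := by
        refine sum_le_sum fun j hj => ?_
        have hij : i ≠ j := (ne_of_mem_of_not_mem hj hi).symm
        by_cases h : j = j₀
        · subst h
          rw [ctlnW_apply_of_not_adj hij hadj, if_pos rfl]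
          linarith
        · rw [if_neg h, sub_zero]
          exact mul_le_mul_of_nonneg_right (ctlnW_apply_le hεδ hij) (hx j hj)
    _ = (-1 + ε) * ∑ j ∈ σ, x j - (δ + ε) * x j₀ := by
        rw [sum_sub_distrib, ← mul_sum, sum_ite_eq' σ j₀, if_pos hj₀]

theorem not_exists_target_of_memFP (hε : 0 < ε) (hσ : σ.Nonempty)
    (hclique : ∀ i ∈ σ, ∀ j ∈ σ, i ≠ j → G i j) {θ : ℝ}
    (hfp : memFP (ctlnW G ε δ) (fun _ => θ) univ σ) :
    ¬ ∃ k, k ∉ σ ∧ ∀ i ∈ σ, G i k := by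
  rintro ⟨k, hk, hadj⟩
  obtain ⟨x, hfix, hsupp⟩ := memFP_univ_iff.1 hfp
  obtain ⟨i, hi⟩ := hσ
  have hxi : 0 < x i := (hsupp i).2 hi
  have hxi_eq : x i = (-1 + ε) * ∑ j ∈ σ, x j + (1 - ε) * x i + θ := by
    have hxi_fix := hfix i
    rw [sum_ctlnW_mul_of_mem_clique hclique hi] at hxi_fix
    grind
  have hk_input : 0 < (-1 + ε) * ∑ j ∈ σ, x j + θ := by linarith [mul_pos hε hxi]
  have hxk := hfix k
  rw [sum_ctlnW_mul_of_forall_adj hk hadj] at hxk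
  exact hk ((hsupp k).1 (hxk ▸ lt_max_of_lt_right hk_input))

theorem memFP_of_not_exists_target {θ : ℝ} (hθ : 0 < θ) (hδ : 0 < δ) (hε : 0 < ε)
    (hε1 : ε < 1) (hclique : ∀ i ∈ σ, ∀ j ∈ σ, i ≠ j → G i j)
    (hfree : ¬ ∃ k, k ∉ σ ∧ ∀ i ∈ σ, G i k) :
    memFP (ctlnW G ε δ) (fun _ => θ) univ σ := by
  have hk : (0 : ℝ) ≤ #σ := Nat.cast_nonneg _
  set D : ℝ := #σ - (#σ - 1) * ε with hD_def
  have hD : 0 < D := by nlinarith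
  set c := θ / D
  have hc : 0 < c := div_pos hθ hD
  have hcD : c * D = θ := div_mul_cancel₀ θ hD.ne'
  refine memFP_univ_iff.2 ⟨fun i => if i ∈ σ then c else 0, fun i => ?_, fun i => ?_⟩
  · have hsum : ∑ j ∈ σ, (if j ∈ σ then c else 0) = #σ * c := by
      rw [sum_ite_of_true fun _ h => h, sum_const, nsmul_eq_mul]
    dsimp only
    by_cases hi : i ∈ σ
    · have h_input : (-1 + ε) * (#σ * c) + (1 - ε) * c + θ = c := by
        linear_combination -hcD + c * hD_def
      rw [sum_ctlnW_mul_of_mem_clique hclique hi, hsum, if_pos hi, h_input, max_eq_right hc.le]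
    · obtain ⟨j₀, hj₀, hadj⟩ : ∃ j₀ ∈ σ, ¬ G j₀ i := by
        push Not at hfree
        exact hfree i hi
      have h_input := sum_ctlnW_mul_le_of_not_adj (by linarith : -δ ≤ ε) hi hj₀ hadj
        (x := fun j => if j ∈ σ then c else 0) fun j hj => by simp [hj, hc.le]
      simp only [hsum, if_pos hj₀] at h_input
      have h_bound : (-1 + ε) * (#σ * c) - (δ + ε) * c + θ = -(δ * c) := by
        linear_combination -hcD + c * hD_def
      rw [if_neg hi, max_eq_left]
      linarith [mul_pos hδ hc]
  · by_cases hi : i ∈ σ <;> simp [hi, hc]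

theorem ctlnW_submatrix_of_clique (hclique : ∀ i ∈ σ, ∀ j ∈ σ, i ≠ j → G i j) :
    (ctlnW G ε δ).submatrix Subtype.val Subtype.val
      = (1 - ε) • (1 : Matrix σ σ ℝ) + (-1 + ε) • of fun _ _ => 1 := by
  ext i j
  rw [submatrix_apply, ctlnW_apply_of_mem_clique hclique i.2 j.2]
  by_cases h : i = j <;> simp [h, one_apply]

theorem re_lt_zero_of_isRoot_charpoly_neg_one_add_ctlnW_submatrix (hε : 0 < ε) (hε1 : ε < 1)
    (hclique : ∀ i ∈ σ, ∀ j ∈ σ, i ≠ j → G i j) {μ : ℂ}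
    (hμ : ((-(1 : Matrix σ σ ℝ) + (ctlnW G ε δ).submatrix Subtype.val Subtype.val).map
      Complex.ofReal).charpoly.IsRoot μ) :
    μ.re < 0 := by
  have hA : (-(1 : Matrix σ σ ℝ) + (ctlnW G ε δ).submatrix Subtype.val Subtype.val).map
      Complex.ofReal = ((-ε : ℝ) : ℂ) • 1 + ((-1 + ε : ℝ) : ℂ) • of fun _ _ => (1 : ℂ) := by
    rw [ctlnW_submatrix_of_clique hclique]
    ext i j
    by_cases h : i = j <;> simp [h, one_apply]
  rw [hA] at hμ
  rcases eq_or_eq_of_isRoot_charpoly_smul_one_add_smul_allOnes hμ with rfl | rfl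
  · simpa using hε
  · simp only [Fintype.card_coe, Complex.add_re, Complex.ofReal_re, Complex.mul_re,
      Complex.natCast_re, Complex.ofReal_im, Complex.natCast_im]
    nlinarith [(Nat.cast_nonneg (#σ) : (0 : ℝ) ≤ #σ)]

theorem detIW_ctlnW_pos_of_clique (hε : 0 < ε) (hε1 : ε < 1)
    (hclique : ∀ i ∈ σ, ∀ j ∈ σ, i ≠ j → G i j) :
    0 < detIW (ctlnW G ε δ) σ := by
  have hIW : (1 : Matrix σ σ ℝ) - (ctlnW G ε δ).submatrix Subtype.val Subtype.val
      = ε • 1 + (1 - ε) • of fun _ _ => 1 := by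
    rw [ctlnW_submatrix_of_clique hclique]
    module
  rw [detIW, hIW, det_smul_one_add_smul_allOnes _ _ hε.ne']
  have : 0 ≤ (1 - ε) / ε * Fintype.card σ :=
    mul_nonneg (div_nonneg (sub_nonneg.2 hε1.le) hε.le) (Nat.cast_nonneg _)
  exact mul_pos (pow_pos hε _) (by linarith)

end Clique

theorem cliques_rule_general {n : ℕ} (G : Fin n → Fin n → Prop) [DecidableRel G]
    (ε δ θ : ℝ)
    (hθ : 0 < θ) (hδ : 0 < δ) (hε : 0 < ε) (hεδ : ε < δ / (δ + 1))
    (W : Matrix (Fin n) (Fin n) ℝ) (hWdef : W = ctlnW G ε δ)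
    (b : Fin n → ℝ) (hbdef : b = fun _ => θ)
    (σ : Finset (Fin n)) (hσ : σ.Nonempty)
    (hclique : ∀ i ∈ σ, ∀ j ∈ σ, i ≠ j → G i j) :
    (memFP W b Finset.univ σ ↔ ¬ ∃ k, k ∉ σ ∧ ∀ i ∈ σ, G i k) ∧
    (memFP W b Finset.univ σ →
      (∀ μ : ℂ, (Matrix.charpoly
          (((-(1 : Matrix {x // x ∈ σ} {x // x ∈ σ} ℝ)
              + W.submatrix Subtype.val Subtype.val)).map Complex.ofReal)).IsRoot μ →
          μ.re < 0) ∧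
      0 < detIW W σ) := by
  subst hWdef hbdef
  have hε1 : ε < 1 := hεδ.trans ((div_lt_one (by linarith)).2 (by linarith))
  exact ⟨⟨not_exists_target_of_memFP hε hσ hclique,
      memFP_of_not_exists_target hθ hδ hε hε1 hclique⟩,
    fun _ => ⟨fun _ => re_lt_zero_of_isRoot_charpoly_neg_one_add_ctlnW_submatrix hε hε1 hclique,
      detIW_ctlnW_pos_of_clique hε hε1 hclique⟩⟩

/-- **Cliques rule.** Let `G` be a simple directed graph on `[n]` with CTLN parameters in
the legal range, and let `σ` be a nonempty clique (all distinct `i, j ∈ σ` are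
bidirectionally connected). Then `σ ∈ FP(G)` iff `σ` is target-free (no `k ∉ σ` receives
an edge from every `i ∈ σ`). Furthermore, when `σ ∈ FP(G)`, every eigenvalue of
`−I + W_σ` has negative real part (the fixed point is stable) and `det(I − W_σ) > 0`. -/
theorem cliques_rule {n : ℕ} (G : Fin n → Fin n → Prop) [DecidableRel G]
    (hGirr : ∀ i, ¬ G i i) (ε δ θ : ℝ)
    (hθ : 0 < θ) (hδ : 0 < δ) (hε : 0 < ε) (hεδ : ε < δ / (δ + 1))
    (W : Matrix (Fin n) (Fin n) ℝ) (hWdef : W = ctlnW G ε δ)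
    (b : Fin n → ℝ) (hbdef : b = fun _ => θ)
    (σ : Finset (Fin n)) (hσ : σ.Nonempty)
    (hclique : ∀ i ∈ σ, ∀ j ∈ σ, i ≠ j → G i j) :
    (memFP W b Finset.univ σ ↔ ¬ ∃ k, k ∉ σ ∧ ∀ i ∈ σ, G i k) ∧
    (memFP W b Finset.univ σ →
      (∀ μ : ℂ, (Matrix.charpoly
          (((-(1 : Matrix {x // x ∈ σ} {x // x ∈ σ} ℝ)
              + W.submatrix Subtype.val Subtype.val)).map Complex.ofReal)).IsRoot μ →
          μ.re < 0) ∧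
      0 < detIW W σ) :=
  cliques_rule_general G ε δ θ hθ hδ hε hεδ W hWdef b hbdef σ hσ hclique
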